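/- arXiv:2309.03922 — 5 statements merged into one kernel-verified Lean document; each statement's English description precedes it below -/
import Mathlib

section
/- For every positive integer x, there exist two square-prime numbers a and b (numbers of the form k^2·p with k ≥ 2 an integer and p prime) such that x = a − b. -/
/-- A square-prime (SP-number): an integer of the form `k^2 * p` with `k ≥ 2` and `p` prime. -/
def IsSquarePrime (n : ℕ) : Prop := ∃ k p : ℕ, 2 ≤ k ∧ p.Prime ∧ n = k ^ 2 * p

lemma isSP (k p : ℕ) (hk : 2 ≤ k) (hp : p.Prime) : IsSquarePrime (k ^ 2 * p) :=
  ⟨k, p, hk, hp, rfl⟩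

/-- natural-number Pell solution for nonsquare d -/
lemma pell_nat (d : ℕ) (hd0 : 0 < d) (hd : ¬ IsSquare d) :
    ∃ w s : ℕ, 1 ≤ s ∧ w ^ 2 = d * s ^ 2 + 1 := by
  obtain ⟨X, Y, h, hY⟩ := Pell.exists_of_not_isSquare (d := (d : ℤ))
    (by exact_mod_cast hd0) (by
      rintro ⟨r, hr⟩
      exact hd ⟨r.natAbs, by
        have : (d : ℤ) = ((r.natAbs * r.natAbs : ℕ) : ℤ) := by
          rw [Int.natAbs_mul_self]; exact hr
        exact_mod_cast this⟩)
  refine ⟨X.natAbs, Y.natAbs, by omega, ?_⟩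
  have hx2 : (X.natAbs : ℤ) ^ 2 = X ^ 2 := by
    rw [Int.natAbs_sq]
  have hy2 : (Y.natAbs : ℤ) ^ 2 = Y ^ 2 := by
    rw [Int.natAbs_sq]
  have : (X.natAbs : ℤ) ^ 2 = d * (Y.natAbs : ℤ) ^ 2 + 1 := by
    rw [hx2, hy2]; linarith
  exact_mod_cast this

theorem squareprime_difference (x : ℕ) (hx : 0 < x) :
    ∃ a b : ℕ, IsSquarePrime a ∧ IsSquarePrime b ∧ (x : ℤ) = (a : ℤ) - (b : ℤ) := by
  have key : ∀ a b : ℕ, IsSquarePrime a → IsSquarePrime b → a = b + x →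
      ∃ a b : ℕ, IsSquarePrime a ∧ IsSquarePrime b ∧ (x : ℤ) = (a : ℤ) - (b : ℤ) := by
    intro a b ha hb hab
    exact ⟨a, b, ha, hb, by rw [hab]; push_cast; ring⟩
  by_cases hx1 : x = 1
  · exact key (2 ^ 2 * 7) (3 ^ 2 * 3) (isSP 2 7 (by norm_num) (by norm_num))
      (isSP 3 3 (by norm_num) (by norm_num)) (by omega)
  by_cases hx2 : x = 2
  · exact key (5 ^ 2 * 2) (4 ^ 2 * 3) (isSP 5 2 (by norm_num) (by norm_num))
      (isSP 4 3 (by norm_num) (by norm_num)) (by omega)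
  by_cases hx6 : x = 6
  · exact key (3 ^ 2 * 2) (2 ^ 2 * 3) (isSP 3 2 (by norm_num) (by norm_num))
      (isSP 2 3 (by norm_num) (by norm_num)) (by omega)
  obtain ⟨s, c, hsc, hs⟩ := Nat.sq_mul_squarefree x
  have hs0 : s ≠ 0 := by rintro rfl; simp at hsc; omega
  have hc0 : 1 ≤ c := by rcases Nat.eq_zero_or_pos c with h | h; · rw [h] at hsc; simp at hsc; omega
                         · exact h
  by_cases hS1 : s = 1
  · -- x = c^2, c ≥ 2 : a = 3c², b = 2c²
    subst hS1
    have hc2 : 2 ≤ c := by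
      rcases Nat.lt_or_ge c 2 with h | h
      · interval_cases c <;> omega
      · exact h
    exact key (c ^ 2 * 3) (c ^ 2 * 2) (isSP c 3 hc2 (by norm_num))
      (isSP c 2 hc2 (by norm_num)) (by omega)
  by_cases hS2 : s = 2
  · subst hS2
    have hc2 : 2 ≤ c := by
      rcases Nat.lt_or_ge c 2 with h | h
      · interval_cases c <;> omega
      · exact h
    exact key (c ^ 2 * 5) (c ^ 2 * 3) (isSP c 5 hc2 (by norm_num))
      (isSP c 3 hc2 (by norm_num)) (by omega)
  by_cases hSp : s.Prime
  · -- Pell case: x = c^2 * s, s odd prime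
    have hs3 : 3 ≤ s := by
      have := hSp.two_le; omega
    have hnsq : ¬ IsSquare (2 * s) := by
      rintro ⟨r, hr⟩
      have h2r : 2 ∣ r := by
        have : 2 ∣ r * r := ⟨s, hr.symm⟩
        exact (Nat.Prime.dvd_mul Nat.prime_two).mp this |>.elim id id
      obtain ⟨u, rfl⟩ := h2r
      have : s = 2 * u ^ 2 := by ring_nf at hr ⊢; omega
      have : (2 : ℕ) ∣ s := ⟨u ^ 2, this⟩
      rcases (Nat.Prime.eq_one_or_self_of_dvd hSp 2 this) with h | h <;> omega
    obtain ⟨w, t, ht, hw⟩ := pell_nat (2 * s) (by omega) hnsq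
    have hw2 : 2 ≤ w := by nlinarith
    refine key ((c * w) ^ 2 * s) ((s * c * t) ^ 2 * 2)
      (isSP (c * w) s (by nlinarith) hSp)
      (isSP (s * c * t) 2 (by nlinarith) (by norm_num)) ?_
    have : (c * w) ^ 2 * s = c ^ 2 * s * w ^ 2 := by ring
    rw [this, hw, ← hsc]; ring
  · -- composite squarefree case
    set p := s.minFac with hpdef
    have hp : p.Prime := Nat.minFac_prime hS1
    have hps : p ∣ s := Nat.minFac_dvd s
    obtain ⟨r, hpr⟩ : ∃ r, s = p * r := hps
    have hr0 : r ≠ 0 := by rintro rfl; simp at hpr; omega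
    have hpnr : ¬ p ∣ r := by
      rintro ⟨r', rfl⟩
      have : p * p ∣ s := ⟨r', by rw [hpr]; ring⟩
      exact hp.one_lt.ne' (Nat.isUnit_iff.mp (hs p this))
    have hr1 : r ≠ 1 := by
      rintro rfl
      rw [hpr] at hSp; simp at hSp; exact hSp hp
    have hrodd : ¬ 2 ∣ r := by
      intro h2r
      have h2s : 2 ∣ s := hpr ▸ Dvd.dvd.mul_left h2r p
      have hple : p ≤ 2 := Nat.minFac_le_of_dvd (le_refl 2) h2s
      have : p = 2 := le_antisymm hple hp.two_le
      exact hpnr (this ▸ h2r)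
    have hr3 : 3 ≤ r := by omega
    rcases Nat.even_or_odd c with hce | hco
    · -- c even
      obtain ⟨c', rfl⟩ : ∃ c', c = 2 * c' := by
        obtain ⟨c', h⟩ := hce; exact ⟨c', by omega⟩
      have hc'1 : 1 ≤ c' := by omega
      have hu3 : 3 ≤ r * c' ^ 2 := by nlinarith
      obtain ⟨t, htu⟩ : ∃ t, r * c' ^ 2 = t + 1 := ⟨r * c' ^ 2 - 1, by omega⟩
      have ht2 : 2 ≤ t := by omega
      refine key ((t + 2) ^ 2 * p) (t ^ 2 * p)
        (isSP (t + 2) p (by omega) hp) (isSP t p ht2 hp) ?_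
      have hxval : x = 4 * (t + 1) * p := by
        rw [← hsc, hpr, ← htu]; ring
      rw [hxval]; ring
    · -- c odd
      have hyodd : (r * c ^ 2) % 2 = 1 := by
        have h1 : Odd r := Nat.odd_iff.mpr (by omega)
        have h2 : Odd (c ^ 2) := hco.pow
        exact Nat.odd_iff.mp (h1.mul h2)
      have hy3 : 3 ≤ r * c ^ 2 := by nlinarith
      have hyne3 : r * c ^ 2 ≠ 3 := by
        intro h3
        have hc1 : c = 1 := by
          by_contra hcne
          have : 2 ≤ c := by omega
          nlinarith
        rw [hc1] at h3
        have hrr : r = 3 := by omega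
        have hp3 : (3 : ℕ) ∣ s := ⟨p, by rw [hpr, hrr]; ring⟩
        have hple : p ≤ 3 := Nat.minFac_le_of_dvd (by norm_num) hp3
        have hpne3 : p ≠ 3 := by rintro h; apply hpnr; rw [h, hrr]
        have hp2 : p = 2 := by have := hp.two_le; omega
        apply hx6
        rw [← hsc, hpr, hp2, hrr, hc1]
        norm_num
      have hy5 : 5 ≤ r * c ^ 2 := by omega
      obtain ⟨t, htu⟩ : ∃ t, r * c ^ 2 = 2 * t + 1 := ⟨(r * c ^ 2) / 2, by omega⟩
      have ht2 : 2 ≤ t := by omega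
      refine key ((t + 1) ^ 2 * p) (t ^ 2 * p)
        (isSP (t + 1) p (by omega) hp) (isSP t p ht2 hp) ?_
      have hxval : x = (2 * t + 1) * p := by rw [← hsc, hpr, ← htu]; ring
      rw [hxval]; ring
end

section
/- For every prime x, there exist a prime p ≠ x and positive integers M, N > 1 such that x·M^2 − p·(x·N)^2 = x; consequently x is a difference of two square-primes. -/
lemma pell_big (D : ℕ) (hD : 0 < D) (hsq : ¬ IsSquare ((D : ℤ))) :
    ∃ M N : ℕ, 1 < M ∧ 1 < N ∧ (M : ℤ) ^ 2 - (D : ℤ) * N ^ 2 = 1 := by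
  obtain ⟨a, b, hab, hb⟩ := Pell.exists_of_not_isSquare (by exact_mod_cast hD) hsq
  set A := a.natAbs with hA
  set B := b.natAbs with hBdef
  have ha2 : (A : ℤ) ^ 2 = a ^ 2 := by
    rw [hA, ← Int.abs_eq_natAbs, sq_abs]
  have hb2 : (B : ℤ) ^ 2 = b ^ 2 := by
    rw [hBdef, ← Int.abs_eq_natAbs, sq_abs]
  have hAB : (A : ℤ) ^ 2 - (D : ℤ) * B ^ 2 = 1 := by rw [ha2, hb2]; exact hab
  have hBpos : 1 ≤ B := Nat.one_le_iff_ne_zero.mpr (by simpa [hBdef] using hb)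
  have hApos : 1 ≤ A := by
    by_contra h
    push_neg at h
    interval_cases A
    simp at hAB
    nlinarith [sq_nonneg ((B : ℤ)), (by exact_mod_cast hD : (0:ℤ) < D),
      (by exact_mod_cast hBpos : (1:ℤ) ≤ B)]
  refine ⟨A ^ 2 + D * B ^ 2, 2 * A * B, ?_, ?_, ?_⟩
  · nlinarith [hApos, hBpos, hD]
  · nlinarith [hApos, hBpos]
  · push_cast
    nlinarith [hAB]

lemma not_sq_mul (p x : ℕ) (hp : p.Prime) (hx : x.Prime) (hne : p ≠ x) :
    ¬ IsSquare ((p * x : ℕ) : ℤ) := by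
  rw [Int.isSquare_natCast_iff]
  rintro ⟨k, hk⟩
  have hpk : p ∣ k := by
    have : p ∣ k * k := ⟨x, hk.symm⟩
    exact hp.dvd_of_dvd_pow (n := 2) (by rwa [sq])
  obtain ⟨m, rfl⟩ := hpk
  have hx' : x = p * (m * m) := by
    have := hk
    have hp0 : 0 < p := hp.pos
    nlinarith [hk]
  exact hne ((Nat.Prime.eq_one_or_self_of_dvd hx p ⟨m * m, hx'⟩).resolve_left hp.one_lt.ne')

theorem prime_is_difference_of_squareprimes (x : ℕ) (hx : x.Prime) :
    (∃ p M N : ℕ, p.Prime ∧ p ≠ x ∧ 1 < M ∧ 1 < N ∧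
      (x : ℤ) * M ^ 2 - (p : ℤ) * (x * N) ^ 2 = x) ∧
    ∃ a b : ℕ, IsSquarePrime a ∧ IsSquarePrime b ∧ (x : ℤ) = (a : ℤ) - (b : ℤ) := by
  obtain ⟨p, hp, hne⟩ : ∃ p : ℕ, p.Prime ∧ p ≠ x := by
    rcases eq_or_ne x 2 with rfl | h
    · exact ⟨3, by norm_num⟩
    · exact ⟨2, Nat.prime_two, fun h2 => h (h2.symm)⟩
  obtain ⟨M, N, hM, hN, hMN⟩ := pell_big (p * x) (Nat.mul_pos hp.pos hx.pos)
    (not_sq_mul p x hp hx hne)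
  have key : (x : ℤ) * M ^ 2 - (p : ℤ) * (x * N) ^ 2 = x := by
    have : (x:ℤ) * ((M : ℤ) ^ 2 - ((p*x : ℕ) : ℤ) * N ^ 2) = (x:ℤ) * 1 := by rw [hMN]
    push_cast at this ⊢
    nlinarith [this]
  refine ⟨⟨p, M, N, hp, hne, hM, hN, key⟩, x * M ^ 2, (x * N) ^ 2 * p, ⟨M, x, hM, hx, by ring⟩,
    ⟨x * N, p, ?_, hp, by ring⟩, ?_⟩
  · calc 2 ≤ 2 * 2 := by norm_num
      _ ≤ x * N := Nat.mul_le_mul hx.two_le hN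
  · push_cast
    linarith [key]
end

section
/- Let Υ be the map on binary sequences (finite or infinite, with values in {0,1}) sending a sequence u to the left edge w of its triangle of iterated absolute differences, where d_k^{(0)} = a_k, d_k^{(j+1)} = |d_{k+1}^{(j)} − d_k^{(j)}|, and w_j = d_0^{(j)}. Then Υ(Υ(u)) = u for every binary sequence u; in particular Υ^{(6)}(u) = u. -/
/-- The triangle of iterated absolute differences: `tri u j k = d_k^{(j)}`,
with `d_k^{(0)} = u k` and `d_k^{(j+1)} = |d_{k+1}^{(j)} − d_k^{(j)}|`. -/
def tri (u : ℕ → ℕ) : ℕ → ℕ → ℕ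
  | 0, k => u k
  | j + 1, k => Nat.dist (tri u j (k + 1)) (tri u j k)

/-- The operator `Υ` sending a sequence to the left edge of its difference triangle. -/
def ups (u : ℕ → ℕ) : ℕ → ℕ := fun j => tri u j 0

lemma tri_le (u : ℕ → ℕ) (hu : ∀ k, u k ≤ 1) : ∀ j k, tri u j k ≤ 1 := by
  intro j
  induction j with
  | zero => intro k; simpa [tri] using hu k
  | succ j ih =>
    intro k
    have h1 := ih (k + 1)
    have h2 := ih k
    simp only [tri, Nat.dist]
    omega

lemma tri_transpose (u : ℕ → ℕ) (hu : ∀ k, u k ≤ 1) :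
    ∀ j k, tri (ups u) j k = tri u k j := by
  intro j
  induction j with
  | zero => intro k; rfl
  | succ j ih =>
    intro k
    have h1 : tri (ups u) (j + 1) k = Nat.dist (tri u (k + 1) j) (tri u k j) := by
      simp only [tri, ih]
    have h2 : tri u (k + 1) j = Nat.dist (tri u k (j + 1)) (tri u k j) := rfl
    have b1 := tri_le u hu k (j + 1)
    have b2 := tri_le u hu k j
    rw [h1, h2]
    simp only [Nat.dist]
    omega

theorem ups_involutive_on_binary (u : ℕ → ℕ) (hu : ∀ k, u k ≤ 1) :
    ups (ups u) = u ∧ ups^[6] u = u := by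
  have h2 : ups (ups u) = u := by
    funext n
    have := tri_transpose u hu n 0
    simpa [ups, tri] using this
  refine ⟨h2, ?_⟩
  have e2 : ups^[2] u = u := h2
  calc ups^[6] u = ups^[2] (ups^[2] (ups^[2] u)) := by
        rw [← Function.iterate_add_apply, ← Function.iterate_add_apply]
    _ = u := by rw [e2, e2, e2]
end

section
/- There exists an infinite strictly increasing sequence of square-primes A₁ < A₂ < ⋯ such that in the triangle of iterated absolute differences generated by (A₁, A₂, …), every other element on the left edge (the entries d_0^{(j)} for odd j, say) equals 1. -/
/-- Pell-type pairs: `pp i = (m, n)` with `2 m² = 3 n² + 2`. -/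
def pp : ℕ → ℕ × ℕ
  | 0 => (5, 4)
  | i + 1 => ((pp i).1 * 5 + (pp i).2 * 6, (pp i).1 * 4 + (pp i).2 * 5)

lemma pp_inv (i : ℕ) : 2 * (pp i).1 ^ 2 = 3 * (pp i).2 ^ 2 + 2 := by
  induction i with
  | zero => rfl
  | succ i ih =>
    simp only [pp]
    nlinarith [ih]

lemma pp_ge (i : ℕ) : 5 ≤ (pp i).1 ∧ 4 ≤ (pp i).2 := by
  induction i with
  | zero => exact ⟨le_refl _, le_refl _⟩
  | succ i ih =>
    simp only [pp]
    omega

lemma pp_snd_lt (i : ℕ) : (pp i).2 < (pp (i + 1)).2 := by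
  have h := pp_ge i
  simp only [pp]
  omega

/-- The sequence: 27, 28, then pairs (3 n², 3 n² + 2 = 2 m²). -/
def A : ℕ → ℕ
  | 0 => 27
  | 1 => 28
  | k + 2 => 3 * (pp (k / 2)).2 ^ 2 + (k % 2) * 2

lemma A_even (i : ℕ) : A (2 * i + 2) = 3 * (pp i).2 ^ 2 := by
  show 3 * (pp ((2 * i) / 2)).2 ^ 2 + ((2 * i) % 2) * 2 = _
  simp [Nat.mul_div_cancel_left, Nat.mul_mod_right]

lemma A_odd (i : ℕ) : A (2 * i + 3) = 3 * (pp i).2 ^ 2 + 2 := by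
  show 3 * (pp ((2 * i + 1) / 2)).2 ^ 2 + ((2 * i + 1) % 2) * 2 = _
  have h1 : (2 * i + 1) / 2 = i := by omega
  have h2 : (2 * i + 1) % 2 = 1 := by omega
  rw [h1, h2]

lemma A_strictMono : StrictMono A := by
  apply strictMono_nat_of_lt_succ
  intro k
  match k with
  | 0 => norm_num [A]
  | 1 =>
    show (28 : ℕ) < 3 * (pp (0 / 2)).2 ^ 2 + (0 % 2) * 2
    norm_num [pp]
  | k + 2 =>
    rcases Nat.even_or_odd k with ⟨j, hj⟩ | ⟨j, hj⟩
    · have e1 : k + 2 = 2 * j + 2 := by omega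
      have e2 : 2 * j + 2 + 1 = 2 * j + 3 := by omega
      rw [e1, e2, A_even j, A_odd j]
      omega
    · have e1 : k + 2 = 2 * j + 3 := by omega
      have e2 : 2 * j + 3 + 1 = 2 * (j + 1) + 2 := by omega
      rw [e1, e2, A_odd j, A_even (j + 1)]
      have h4 : (pp j).2 < (pp (j + 1)).2 := pp_snd_lt j
      have h6 : 4 ≤ (pp j).2 := (pp_ge j).2
      nlinarith
lemma A_sp (k : ℕ) : IsSquarePrime (A k) := by
  match k with
  | 0 => exact ⟨3, 3, by norm_num, by norm_num, by norm_num [A]⟩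
  | 1 => exact ⟨2, 7, by norm_num, by norm_num, by norm_num [A]⟩
  | k + 2 =>
    rcases Nat.even_or_odd k with ⟨j, hj⟩ | ⟨j, hj⟩
    · have e1 : k + 2 = 2 * j + 2 := by omega
      rw [e1, A_even j]
      exact ⟨(pp j).2, 3, by have := (pp_ge j).2; omega, by norm_num, by ring⟩
    · have e1 : k + 2 = 2 * j + 3 := by omega
      rw [e1, A_odd j]
      refine ⟨(pp j).1, 2, by have := (pp_ge j).1; omega, Nat.prime_two, ?_⟩
      have := pp_inv j
      omega

/-- Row-1 (gap) facts. -/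
lemma row1_0 : tri A 1 0 = 1 := by
  show Nat.dist (A 1) (A 0) = 1
  norm_num [A, Nat.dist]

lemma row1_1 : tri A 1 1 = 20 := by
  show Nat.dist (A 2) (A 1) = 20
  have h : A 2 = 48 := by
    show 3 * (pp (0 / 2)).2 ^ 2 + (0 % 2) * 2 = 48
    norm_num [pp]
  rw [h]
  norm_num [A, Nat.dist]

lemma row1_even (k : ℕ) : tri A 1 (2 * k + 2) = 2 := by
  show Nat.dist (A (2 * k + 3)) (A (2 * k + 2)) = 2
  rw [A_odd k, A_even k]
  simp [Nat.dist]

/-- Shape predicate for odd rows ≥ 3: starts with 1, zeros at even positions ≥ 2. -/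
def P (v : ℕ → ℕ) : Prop := v 0 = 1 ∧ ∀ k, v (2 * k + 2) = 0

lemma tri_succ_succ (u : ℕ → ℕ) (j k : ℕ) :
    tri u (j + 2) k =
      Nat.dist (Nat.dist (tri u j (k + 2)) (tri u j (k + 1)))
        (Nat.dist (tri u j (k + 1)) (tri u j k)) := rfl

lemma P_step (v : ℕ → ℕ) (hv : P v)
    (w : ℕ → ℕ)
    (hw : ∀ k, w k = Nat.dist (Nat.dist (v (k + 2)) (v (k + 1))) (Nat.dist (v (k + 1)) (v k))) :
    P w := by
  obtain ⟨h0, hz⟩ := hv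
  constructor
  · rw [hw 0, h0]
    have h2 : v 2 = 0 := by have := hz 0; simpa using this
    rw [h2]
    simp only [Nat.dist]
    omega
  · intro k
    rw [hw (2 * k + 2)]
    have h2 : v (2 * k + 2) = 0 := hz k
    have h4 : v (2 * k + 2 + 2) = 0 := by
      have := hz (k + 1)
      have e : 2 * (k + 1) + 2 = 2 * k + 2 + 2 := by ring
      rwa [e] at this
    rw [h2, h4]
    simp only [Nat.dist]
    omega

lemma P_row3 : P (tri A 3) := by
  constructor
  · rw [tri_succ_succ A 1 0, row1_0, row1_1]
    have h2 : tri A 1 2 = 2 := by have := row1_even 0; simpa using this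
    rw [h2]
    simp [Nat.dist]
  · intro k
    rw [tri_succ_succ A 1 (2 * k + 2)]
    have h2 : tri A 1 (2 * k + 2) = 2 := row1_even k
    have h4 : tri A 1 (2 * k + 2 + 2) = 2 := by
      have := row1_even (k + 1)
      have e : 2 * (k + 1) + 2 = 2 * k + 2 + 2 := by ring
      rwa [e] at this
    rw [h2, h4, Nat.dist_comm 2 (tri A 1 (2 * k + 2 + 1))]
    exact Nat.dist_self _

lemma P_odd_rows (i : ℕ) : P (tri A (2 * i + 3)) := by
  induction i with
  | zero => exact P_row3
  | succ i ih =>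
    have : 2 * (i + 1) + 3 = (2 * i + 3) + 2 := by ring
    rw [this]
    exact P_step (tri A (2 * i + 3)) ih _ (fun k => tri_succ_succ A (2 * i + 3) k)

theorem exists_squareprime_sequence_with_alternating_ones :
    ∃ A : ℕ → ℕ, StrictMono A ∧ (∀ n, IsSquarePrime (A n)) ∧
      ∀ j, Odd j → tri A j 0 = 1 := by
  refine ⟨A, A_strictMono, A_sp, ?_⟩
  rintro j ⟨s, hs⟩
  match s, hs with
  | 0, hs => subst hs; exact row1_0
  | i + 1, hs =>
    subst hs
    have : 2 * (i + 1) + 1 = 2 * i + 3 := by ring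
    rw [this]
    exact (P_odd_rows i).1
end

section
/- Let u be a sequence of non-negative integers and suppose Υ^{(6)}(u) = u, where Υ sends a sequence to the left edge of its iterated absolute-difference triangle. If a_ρ is a champion of u (i.e., a_ρ > 0 and a_j < a_ρ for all 0 ≤ j < ρ) with ρ > 0, then all entries of the triangle strictly inside the hexagonal circle of radius ρ around a₀ are 0, and u has no champion other than a_ρ; in general any u with Υ^{(6)}(u) = u has at most one champion. -/
/-- `a_ρ` is a champion of `u`: it is positive and strictly larger than all earlier terms. -/
def IsChampion (u : ℕ → ℕ) (ρ : ℕ) : Prop := 0 < u ρ ∧ ∀ j, j < ρ → u j < u ρ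

lemma nat_dist_le_max (a b : ℕ) : Nat.dist a b ≤ max a b := by
  simp [Nat.dist]; omega

lemma tri_lt (u : ℕ → ℕ) (B : ℕ) : ∀ j k, (∀ i, i ≤ j → u (k + i) < B) → tri u j k < B := by
  intro j
  induction j with
  | zero => intro k h; simpa [tri] using h 0 (le_refl 0)
  | succ j ih =>
    intro k h
    have h1 : tri u j (k + 1) < B := by
      apply ih
      intro i hi
      have e : (k + 1) + i = k + (i + 1) := by omega
      rw [e]
      exact h (i + 1) (by omega)
    have h2 : tri u j k < B := ih k (fun i hi => h i (by omega))
    calc tri u (j + 1) k = Nat.dist (tri u j (k + 1)) (tri u j k) := rfl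
      _ ≤ max (tri u j (k + 1)) (tri u j k) := nat_dist_le_max _ _
      _ < B := by omega

lemma ups_iter_lt (u : ℕ → ℕ) (ρ M : ℕ) (h0 : ∀ i, i < ρ → u i < M) :
    ∀ m i, i < ρ → (ups^[m] u) i < M := by
  intro m
  induction m with
  | zero => simpa using h0
  | succ m ih =>
    intro i hi
    rw [Function.iterate_succ_apply']
    show tri (ups^[m] u) i 0 < M
    apply tri_lt
    intro l hl
    simpa using ih l (by omega)

lemma diag_zero (u : ℕ → ℕ) (h6 : ups^[6] u = u) (ρ : ℕ) (hρ : 0 < ρ)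
    (hch : IsChampion u ρ) :
    ∀ m, m < 6 → ∀ j k, j + k < ρ → tri (ups^[m] u) j k = 0 := by
  obtain ⟨hpos, hlt⟩ := hch
  set M := u ρ with hM
  have hint : ∀ m i, i < ρ → (ups^[m] u) i < M := ups_iter_lt u ρ M hlt
  set C : ℕ → ℕ → ℕ := fun m j => tri (ups^[m] u) j (ρ - j) with hCdef
  set X : ℕ → ℕ → ℕ := fun m j => tri (ups^[m] u) j (ρ - 1 - j) with hXdef
  have hXlt : ∀ m j, j < ρ → X m j < M := by
    intro m j hj
    apply tri_lt
    intro i hi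
    exact hint m _ (by omega)
  have hwrap : ∀ m, C m ρ = C (m + 1) 0 := by
    intro m
    show tri (ups^[m] u) ρ (ρ - ρ) = tri (ups^[m + 1] u) 0 (ρ - 0)
    rw [Function.iterate_succ_apply']
    simp only [Nat.sub_self, Nat.sub_zero]
    rfl
  have hstep : ∀ m j, j < ρ → C m (j + 1) = Nat.dist (C m j) (X m j) := by
    intro m j hj
    have e1 : ρ - (j + 1) + 1 = ρ - j := by omega
    have e2 : ρ - (j + 1) = ρ - 1 - j := by omega
    show Nat.dist (tri (ups^[m] u) j (ρ - (j + 1) + 1)) (tri (ups^[m] u) j (ρ - (j + 1))) = _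
    rw [e1, e2]
  have hC00 : C 0 0 = M := by
    show tri (ups^[0] u) 0 (ρ - 0) = M
    simp [tri, hM]
  have hC60 : C 6 0 = M := by
    show tri (ups^[6] u) 0 (ρ - 0) = M
    rw [h6]; simp [tri, hM]
  have inTri : ∀ m, C m 0 ≤ M → ∀ j, j ≤ ρ → C m j ≤ M := by
    intro m h0 j
    induction j with
    | zero => intro _; exact h0
    | succ j ih =>
      intro hj
      have hj' : j < ρ := by omega
      rw [hstep m j hj']
      have a1 := hXlt m j hj'
      have a2 := ih (by omega)
      have a3 := nat_dist_le_max (C m j) (X m j)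
      omega
  have hCle : ∀ m j, j ≤ ρ → C m j ≤ M := by
    intro m
    induction m with
    | zero => exact inTri 0 (le_of_eq hC00)
    | succ m ih =>
      apply inTri
      rw [← hwrap]
      exact ih ρ le_rfl
  have inTriLt : ∀ m j j', j ≤ j' → j' ≤ ρ → C m j < M → C m j' < M := by
    intro m j j' hle
    induction j', hle using Nat.le_induction with
    | base => intro _ h; exact h
    | succ j' hjj' ih =>
      intro hj' h
      have hj'' : j' < ρ := by omega
      have h1 := ih (by omega) h
      rw [hstep m j' hj'']
      have a1 := hXlt m j' hj''
      have a2 := nat_dist_le_max (C m j') (X m j')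
      omega
  have hchain : ∀ d m, C m 0 < M → C (m + d) 0 < M := by
    intro d
    induction d with
    | zero => intro m h; simpa using h
    | succ d ih =>
      intro m h
      have h1 : C m ρ < M := inTriLt m 0 ρ (by omega) le_rfl h
      have h2 : C (m + 1) 0 < M := by rw [← hwrap]; exact h1
      have h3 := ih (m + 1) h2
      have e : m + 1 + d = m + (d + 1) := by omega
      rwa [e] at h3
  have hCeq : ∀ m, m < 6 → ∀ j, j ≤ ρ → C m j = M := by
    intro m hm j hj
    by_contra hne
    have hlt' : C m j < M := lt_of_le_of_ne (hCle m j hj) hne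
    have h1 : C m ρ < M := inTriLt m j ρ hj le_rfl hlt'
    have h2 : C (m + 1) 0 < M := by rw [← hwrap]; exact h1
    have h3 : C (m + 1 + (5 - m)) 0 < M := hchain (5 - m) (m + 1) h2
    have he : m + 1 + (5 - m) = 6 := by omega
    rw [he] at h3
    omega
  have hXzero : ∀ m, m < 6 → ∀ j, j < ρ → X m j = 0 := by
    intro m hm j hj
    have h1 : C m (j + 1) = M := hCeq m hm (j + 1) (by omega)
    have h2 : C m j = M := hCeq m hm j (by omega)
    rw [hstep m j hj, h2] at h1
    have h3 := hXlt m j hj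
    simp [Nat.dist] at h1
    omega
  have hdiag : ∀ m, m < 6 → ∀ j k, j + k = ρ - 1 → tri (ups^[m] u) j k = 0 := by
    intro m hm j k hjk
    have hj : j < ρ := by omega
    have h := hXzero m hm j hj
    have hk : ρ - 1 - j = k := by omega
    simp only [hXdef] at h
    rwa [hk] at h
  have hdown : ∀ m, m < 6 → ∀ e d, d + e = ρ - 1 → ∀ j k, j + k = d → tri (ups^[m] u) j k = 0 := by
    intro m hm e
    induction e with
    | zero => intro d hd j k hjk; exact hdiag m hm j k (by omega)
    | succ e ih =>
      intro d hd j k hjk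
      have h1 : tri (ups^[m] u) (j + 1) k = 0 := ih (d + 1) (by omega) (j + 1) k (by omega)
      have h2 : tri (ups^[m] u) j (k + 1) = 0 := ih (d + 1) (by omega) j (k + 1) (by omega)
      have h3 : tri (ups^[m] u) (j + 1) k
          = Nat.dist (tri (ups^[m] u) j (k + 1)) (tri (ups^[m] u) j k) := rfl
      rw [h3, h2] at h1
      simp [Nat.dist] at h1
      omega
  intro m hm j k hjk
  exact hdown m hm (ρ - 1 - (j + k)) (j + k) (by omega) j k rfl

theorem champion_unique_of_period_six (u : ℕ → ℕ) (h6 : ups^[6] u = u) :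
    (∀ ρ, 0 < ρ → IsChampion u ρ →
      ∀ m, m < 6 → ∀ j k, 0 < j + k → j + k < ρ → tri (ups^[m] u) j k = 0) ∧
    (∀ ρ ρ', IsChampion u ρ → IsChampion u ρ' → ρ = ρ') := by
  have key : ∀ a b, IsChampion u a → IsChampion u b → a < b → False := by
    intro a b ha hb hab
    have hb0 : 0 < b := by omega
    have h := diag_zero u h6 b hb0 hb 0 (by norm_num) 0 a (by omega)
    simp [tri] at h
    have := ha.1
    omega
  constructor
  · intro ρ hρ hch m hm j k _ hjk
    exact diag_zero u h6 ρ hρ hch m hm j k hjk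
  · intro ρ ρ' h h'
    rcases lt_trichotomy ρ ρ' with hlt | heq | hgt
    · exact absurd (key ρ ρ' h h' hlt) (by simp)
    · exact heq
    · exact absurd (key ρ' ρ h' h hgt) (by simp)
end
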